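/- arXiv:math/0607175 — 2 statements merged into one kernel-verified Lean document; each statement's English description precedes it below -/
import Mathlib

section
/- Let h₀ be a marginal tracial state on B ⊗ B with range projection R. Then h₀ is extremal among marginal tracial states if and only if (R (B⊗B) R) ∩ (ℂ I + V) = ℂ h₀, where V = ker(P + Q). -/
open Matrix Kronecker
open scoped ComplexOrder

/-- The trace-preserving conditional expectation of `B ⊗ B` onto `B ⊗ I`:
`P(x ⊗ y) = τ(y) (x ⊗ I)`. -/
noncomputable def Pexp (n : ℕ) (m : Matrix (Fin n × Fin n) (Fin n × Fin n) ℂ) :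
    Matrix (Fin n × Fin n) (Fin n × Fin n) ℂ :=
  Matrix.of fun p q => if p.2 = q.2 then (∑ k, m (p.1, k) (q.1, k)) / n else 0

/-- The trace-preserving conditional expectation of `B ⊗ B` onto `I ⊗ B`:
`Q(x ⊗ y) = τ(x) (I ⊗ y)`. -/
noncomputable def Qexp (n : ℕ) (m : Matrix (Fin n × Fin n) (Fin n × Fin n) ℂ) :
    Matrix (Fin n × Fin n) (Fin n × Fin n) ℂ :=
  Matrix.of fun p q => if p.1 = q.1 then (∑ k, m (k, p.2) (k, q.2)) / n else 0

/-- A marginal tracial state, as a density matrix: positive with `P(h) = Q(h) = I`. -/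
def IsMTS (n : ℕ) (h : Matrix (Fin n × Fin n) (Fin n × Fin n) ℂ) : Prop :=
  h.PosSemidef ∧ Pexp n h = 1 ∧ Qexp n h = 1

/-- An extreme point of the convex set of marginal tracial states. -/
def IsExtremalMTS (n : ℕ) (h₀ : Matrix (Fin n × Fin n) (Fin n × Fin n) ℂ) : Prop :=
  IsMTS n h₀ ∧ ∀ (h₁ h₂ : Matrix (Fin n × Fin n) (Fin n × Fin n) ℂ) (t : ℝ),
    0 < t → t < 1 → IsMTS n h₁ → IsMTS n h₂ →
    h₀ = (t : ℂ) • h₁ + ((1 - t : ℝ) : ℂ) • h₂ → h₁ = h₀ ∧ h₂ = h₀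

/-!
If `h₀` is extremal and `z` is a self-adjoint element of `R (B ⊗ B) R ∩ ker P ∩ ker Q`, then `z`
lies in the hereditary corner of `h₀`, so `-C h₀ ≤ z ≤ C h₀` for some `C`; hence `h₀ ± ε z` are
marginal tracial states with midpoint `h₀`, which forces `z = 0`. Splitting into real and
imaginary parts, the same holds for every `z` in that space, and for `k = c I + v` in
`R (B ⊗ B) R ∩ (ℂ I + V)` the difference `k - c h₀` is such a `z`, because
`ker (P + Q) = ker P ∩ ker Q`.

Conversely, if `h₀ = t h₁ + (1 - t) h₂`, then `ker h₀ ⊆ ker hᵢ`, so `hᵢ = R hᵢ R`, while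
`hᵢ - I ∈ V`; so `hᵢ` is a multiple of `h₀`, and comparing traces gives `hᵢ = h₀`.
-/

section CStarAlgebra

variable {A : Type*} [CStarAlgebra A] [PartialOrder A] [StarOrderedRing A]

lemma IsSelfAdjoint.one_sub_nonneg_of_norm_le_one {a : A} (ha : IsSelfAdjoint a) (h : ‖a‖ ≤ 1) :
    0 ≤ 1 - a := by
  rw [sub_nonneg]
  calc a ≤ algebraMap ℝ A ‖a‖ := ha.le_algebraMap_norm_self
    _ ≤ algebraMap ℝ A 1 := algebraMap_mono A h
    _ = 1 := map_one _

lemma IsSelfAdjoint.exists_one_add_smul_nonneg {a : A} (ha : IsSelfAdjoint a) :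
    ∃ ε : ℝ, 0 < ε ∧ 0 ≤ 1 + ε • a ∧ 0 ≤ 1 - ε • a := by
  set ε := (‖a‖ + 1)⁻¹
  have hε : 0 < ε := by positivity
  have hεa : IsSelfAdjoint (ε • a) := (IsSelfAdjoint.all ε).smul ha
  have hnorm : ‖ε • a‖ ≤ 1 := by
    rw [norm_smul, Real.norm_of_nonneg hε.le, inv_mul_le_one₀ (by positivity)]
    linarith
  refine ⟨ε, hε, ?_, hεa.one_sub_nonneg_of_norm_le_one hnorm⟩
  rw [← sub_neg_eq_add]
  exact hεa.neg.one_sub_nonneg_of_norm_le_one (by rwa [norm_neg])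

/-- Writing `h = b⋆b` and `R = hc`, a self-adjoint `z = RzR` equals `b⋆ u b` with `u = bczc⋆b⋆`
self-adjoint, so `h ± εz = b⋆(1 ± εu)b`. -/
lemma exists_add_smul_nonneg_of_mul_mul_eq {h R c z : A} (hh : 0 ≤ h) (hR : IsSelfAdjoint R)
    (hRh : R = h * c) (hz : IsSelfAdjoint z) (hzR : R * z * R = z) :
    ∃ ε : ℝ, 0 < ε ∧ 0 ≤ h + ε • z ∧ 0 ≤ h - ε • z := by
  obtain ⟨b, rfl⟩ := CStarAlgebra.nonneg_iff_eq_star_mul_self.mp hh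
  set u := b * c * z * star c * star b
  have hu : IsSelfAdjoint u := by
    simp only [u, IsSelfAdjoint, star_mul, star_star, hz.star_eq, mul_assoc]
  have hzu : z = star b * u * b := by
    have hR' : R = star c * (star b * b) := by
      rw [← hR.star_eq, hRh, star_mul, (IsSelfAdjoint.star_mul_self b).star_eq]
    conv_lhs => rw [← hzR]
    nth_rw 1 [hRh]
    rw [hR']
    simp only [u, mul_assoc]
  obtain ⟨ε, hε, hplus, hminus⟩ := hu.exists_one_add_smul_nonneg
  refine ⟨ε, hε, ?_, ?_⟩
  · convert star_left_conjugate_nonneg hplus b using 1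
    rw [hzu]
    noncomm_ring
  · convert star_left_conjugate_nonneg hminus b using 1
    rw [hzu]
    noncomm_ring

end CStarAlgebra

lemma Submodule.eq_zero_of_forall_isSelfAdjoint {A : Type*} [AddCommGroup A] [StarAddMonoid A]
    [Module ℂ A] [StarModule ℂ A] (p : Submodule ℂ A) (hp : ∀ x ∈ p, star x ∈ p)
    (h : ∀ x ∈ p, IsSelfAdjoint x → x = 0) {x : A} (hx : x ∈ p) : x = 0 := by
  have hre : (realPart x : A) ∈ p := by
    rw [realPart_apply_coe]
    exact p.smul_of_tower_mem _ (p.add_mem hx (hp x hx))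
  have him : (imaginaryPart x : A) ∈ p := by
    rw [imaginaryPart_apply_coe]
    exact p.smul_mem _ (p.smul_of_tower_mem _ (p.sub_mem hx (hp x hx)))
  rw [← realPart_add_I_smul_imaginaryPart x, h _ hre (realPart x).2, h _ him (imaginaryPart x).2,
    smul_zero, add_zero]

namespace Matrix

variable {ι : Type*} [Fintype ι]

lemma exists_eq_mul_of_range_toLin'_le [DecidableEq ι] {R h : Matrix ι ι ℂ}
    (hle : LinearMap.range (toLin' R) ≤ LinearMap.range (toLin' h)) : ∃ c, R = h * c := by
  choose x hx using fun j => hle ⟨Pi.single j 1, rfl⟩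
  refine ⟨(of x)ᵀ, ext_of_mulVec_single fun j => ?_⟩
  simp only [toLin'_apply] at hx
  rw [← hx, ← mulVec_mulVec, mulVec_single_one]
  rfl

lemma mul_eq_self_of_range_toLin'_le [DecidableEq ι] {R h : Matrix ι ι ℂ} (hR : R * R = R)
    (hle : LinearMap.range (toLin' h) ≤ LinearMap.range (toLin' R)) : R * h = h := by
  obtain ⟨c, rfl⟩ := exists_eq_mul_of_range_toLin'_le hle
  rw [← Matrix.mul_assoc, hR]

lemma mul_eq_self_of_ker_le {R h g : Matrix ι ι ℂ} (hhR : h * R = h)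
    (hker : ∀ x, h *ᵥ x = 0 → g *ᵥ x = 0) : g * R = g := by
  refine ext_iff_mulVec.mpr fun x => ?_
  have := hker (R *ᵥ x - x) (by rw [mulVec_sub, mulVec_mulVec, hhR, sub_self])
  rwa [mulVec_sub, mulVec_mulVec, sub_eq_zero] at this

lemma PosSemidef.mulVec_eq_zero_of_smul_add {A B : Matrix ι ι ℂ} (hA : A.PosSemidef)
    (hB : B.PosSemidef) {s r : ℝ} (hs : 0 < s) (hr : 0 ≤ r) {x : ι → ℂ}
    (hx : ((s : ℂ) • A + (r : ℂ) • B) *ᵥ x = 0) : A *ᵥ x = 0 := by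
  have hsA := hA.smul (Complex.zero_le_real.mpr hs.le)
  have hrB := hB.smul (Complex.zero_le_real.mpr hr)
  have hsum : star x ⬝ᵥ (((s : ℂ) • A) *ᵥ x) + star x ⬝ᵥ (((r : ℂ) • B) *ᵥ x) = 0 := by
    rw [← dotProduct_add, ← add_mulVec, hx, dotProduct_zero]
  have hsAx := (hsA.dotProduct_mulVec_zero_iff x).mp
    ((add_eq_zero_iff_of_nonneg (hsA.dotProduct_mulVec_nonneg x)
      (hrB.dotProduct_mulVec_nonneg x)).mp hsum).1
  rw [smul_mulVec, smul_eq_zero] at hsAx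
  exact hsAx.resolve_left (Complex.ofReal_ne_zero.mpr hs.ne')

open scoped MatrixOrder Matrix.Norms.L2Operator in
lemma PosSemidef.exists_add_smul_posSemidef [DecidableEq ι] {h R z : Matrix ι ι ℂ}
    (hh : h.PosSemidef) (hR : Rᴴ = R) (hle : LinearMap.range (toLin' R) ≤ LinearMap.range (toLin' h))
    (hz : zᴴ = z) (hzR : R * z * R = z) :
    ∃ ε : ℝ, 0 < ε ∧ (h + (ε : ℂ) • z).PosSemidef ∧ (h - (ε : ℂ) • z).PosSemidef := by
  obtain ⟨c, hc⟩ := exists_eq_mul_of_range_toLin'_le hle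
  obtain ⟨ε, hε, hplus, hminus⟩ := exists_add_smul_nonneg_of_mul_mul_eq hh.nonneg hR hc hz hzR
  exact ⟨ε, hε, by simpa only [Complex.coe_smul] using hplus.posSemidef,
    by simpa only [Complex.coe_smul] using hminus.posSemidef⟩

end Matrix

section MarginalTracialStates

variable {n : ℕ}

local notation "M" => Matrix (Fin n × Fin n) (Fin n × Fin n) ℂ

lemma Pexp_add (a b : M) : Pexp n (a + b) = Pexp n a + Pexp n b := by
  ext p q
  simp only [Pexp, Matrix.add_apply, of_apply, Finset.sum_add_distrib, add_div]
  split_ifs <;> simp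

lemma Pexp_smul (c : ℂ) (a : M) : Pexp n (c • a) = c • Pexp n a := by
  ext p q
  simp only [Pexp, Matrix.smul_apply, of_apply, smul_eq_mul, ← Finset.mul_sum, mul_div_assoc]
  split_ifs <;> simp

lemma Pexp_zero : Pexp n (0 : M) = 0 := by
  simpa using Pexp_smul (n := n) 0 0

lemma Pexp_sub (a b : M) : Pexp n (a - b) = Pexp n a - Pexp n b := by
  simpa [sub_eq_add_neg, Pexp_add] using Pexp_smul (-1) b

lemma Pexp_one (hn : n ≠ 0) : Pexp n (1 : M) = 1 := by
  have hn' : (n : ℂ) ≠ 0 := Nat.cast_ne_zero.mpr hn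
  ext p q
  simp only [Pexp, of_apply, one_apply, Prod.ext_iff]
  split_ifs <;> simp_all

lemma Pexp_conjTranspose (a : M) : Pexp n aᴴ = (Pexp n a)ᴴ := by
  ext p q
  simp only [Pexp, conjTranspose_apply, of_apply, eq_comm (a := q.2)]
  split_ifs <;> simp [star_sum]

lemma trace_Pexp (hn : n ≠ 0) (a : M) : (Pexp n a).trace = a.trace := by
  have hn' : (n : ℂ) ≠ 0 := Nat.cast_ne_zero.mpr hn
  simp [trace, Pexp, Fintype.sum_prod_type, mul_div_cancel₀ _ hn']

lemma Pexp_Pexp (hn : n ≠ 0) (a : M) : Pexp n (Pexp n a) = Pexp n a := by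
  have hn' : (n : ℂ) ≠ 0 := Nat.cast_ne_zero.mpr hn
  ext p q
  simp [Pexp, hn']

lemma Pexp_Qexp (a : M) : Pexp n (Qexp n a) = (a.trace / (n * n)) • 1 := by
  ext p q
  simp only [Pexp, Qexp, of_apply, Matrix.smul_apply, one_apply, Prod.ext_iff, trace, diag,
    Fintype.sum_prod_type]
  split_ifs <;> simp_all [Finset.sum_div, div_div]
  rw [Finset.sum_comm]

lemma Qexp_add (a b : M) : Qexp n (a + b) = Qexp n a + Qexp n b := by
  ext p q
  simp only [Qexp, Matrix.add_apply, of_apply, Finset.sum_add_distrib, add_div]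
  split_ifs <;> simp

lemma Qexp_smul (c : ℂ) (a : M) : Qexp n (c • a) = c • Qexp n a := by
  ext p q
  simp only [Qexp, Matrix.smul_apply, of_apply, smul_eq_mul, ← Finset.mul_sum, mul_div_assoc]
  split_ifs <;> simp

lemma Qexp_zero : Qexp n (0 : M) = 0 := by
  simpa using Qexp_smul (n := n) 0 0

lemma Qexp_sub (a b : M) : Qexp n (a - b) = Qexp n a - Qexp n b := by
  simpa [sub_eq_add_neg, Qexp_add] using Qexp_smul (-1) b

lemma Qexp_one (hn : n ≠ 0) : Qexp n (1 : M) = 1 := by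
  have hn' : (n : ℂ) ≠ 0 := Nat.cast_ne_zero.mpr hn
  ext p q
  simp only [Qexp, of_apply, one_apply, Prod.ext_iff]
  split_ifs <;> simp_all

lemma Qexp_conjTranspose (a : M) : Qexp n aᴴ = (Qexp n a)ᴴ := by
  ext p q
  simp only [Qexp, conjTranspose_apply, of_apply, eq_comm (a := q.1)]
  split_ifs <;> simp [star_sum]

/-- Since `P ∘ Q = τ(·) I`, applying `P` to `P v + Q v = 0` shows that `P v` is a multiple of `I`,
and comparing traces shows that the multiple vanishes. -/
lemma Pexp_add_Qexp_eq_zero_iff (hn : n ≠ 0) {v : M} :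
    Pexp n v + Qexp n v = 0 ↔ Pexp n v = 0 ∧ Qexp n v = 0 := by
  refine ⟨fun hv => ?_, fun ⟨hP, hQ⟩ => by rw [hP, hQ, add_zero]⟩
  have hPv : Pexp n v = -(v.trace / (n * n)) • 1 := by
    have := congrArg (Pexp n) hv
    rw [Pexp_add, Pexp_Pexp hn, Pexp_Qexp, Pexp_zero] at this
    rw [neg_smul]
    exact eq_neg_of_add_eq_zero_left this
  have htr : v.trace = 0 := by
    have hn' : (n : ℂ) ≠ 0 := Nat.cast_ne_zero.mpr hn
    have := congrArg trace hPv
    rw [trace_Pexp hn, trace_smul, trace_one, Fintype.card_prod, Fintype.card_fin, smul_eq_mul,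
      Nat.cast_mul, neg_mul, div_mul_cancel₀ _ (mul_ne_zero hn' hn')] at this
    exact self_eq_neg.mp this
  have hP : Pexp n v = 0 := by rw [hPv, htr, zero_div, neg_zero, zero_smul]
  exact ⟨hP, by rwa [hP, zero_add] at hv⟩

lemma IsMTS.trace_eq (hn : n ≠ 0) {g : M} (hg : IsMTS n g) : g.trace = (1 : M).trace := by
  rw [← trace_Pexp hn, hg.2.1]

lemma IsMTS.Pexp_add_Qexp_sub_one (hn : n ≠ 0) {g : M} (hg : IsMTS n g) :
    Pexp n (g - 1) + Qexp n (g - 1) = 0 := by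
  rw [Pexp_sub, Qexp_sub, hg.2.1, hg.2.2, Pexp_one hn, Qexp_one hn, sub_self, add_zero]

lemma IsMTS.eq_of_eq_smul (hn : n ≠ 0) {g h : M} (hg : IsMTS n g) (hh : IsMTS n h) {c : ℂ}
    (hc : g = c • h) : g = h := by
  have htr : (1 : M).trace ≠ 0 := by simp [trace_one, hn]
  have hc1 : c = 1 := by
    have := hg.trace_eq hn
    rw [hc, trace_smul, hh.trace_eq hn, smul_eq_mul] at this
    exact (mul_eq_right₀ htr).mp this
  rw [hc, hc1, one_smul]

def cornerKer (R : M) : Submodule ℂ M where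
  carrier := {z | R * z * R = z ∧ Pexp n z = 0 ∧ Qexp n z = 0}
  add_mem' := by
    rintro a b ⟨ha, hPa, hQa⟩ ⟨hb, hPb, hQb⟩
    exact ⟨by rw [Matrix.mul_add, Matrix.add_mul, ha, hb], by rw [Pexp_add, hPa, hPb, add_zero],
      by rw [Qexp_add, hQa, hQb, add_zero]⟩
  zero_mem' := ⟨by simp, Pexp_zero, Qexp_zero⟩
  smul_mem' := by
    rintro c a ⟨ha, hPa, hQa⟩
    exact ⟨by rw [mul_smul_comm, smul_mul_assoc, ha], by rw [Pexp_smul, hPa, smul_zero],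
      by rw [Qexp_smul, hQa, smul_zero]⟩

lemma star_mem_cornerKer {R z : M} (hR : Rᴴ = R) (hz : z ∈ cornerKer R) :
    star z ∈ cornerKer R := by
  obtain ⟨hzR, hP, hQ⟩ := hz
  refine ⟨?_, ?_, ?_⟩
  · change R * zᴴ * R = zᴴ
    conv_rhs => rw [← hzR]
    rw [conjTranspose_mul, conjTranspose_mul, hR, Matrix.mul_assoc]
  · rw [star_eq_conjTranspose, Pexp_conjTranspose, hP, conjTranspose_zero]
  · rw [star_eq_conjTranspose, Qexp_conjTranspose, hQ, conjTranspose_zero]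

lemma IsExtremalMTS.eq_zero_of_mem_cornerKer {h₀ R z : M} (hext : IsExtremalMTS n h₀)
    (hR : Rᴴ = R) (hle : LinearMap.range (toLin' R) ≤ LinearMap.range (toLin' h₀))
    (hz : z ∈ cornerKer R) : z = 0 := by
  refine (cornerKer R).eq_zero_of_forall_isSelfAdjoint (fun _ => star_mem_cornerKer hR)
    (fun z hz hsa => ?_) hz
  obtain ⟨hps, hP₀, hQ₀⟩ := hext.1
  obtain ⟨hzR, hPz, hQz⟩ := hz
  obtain ⟨ε, hε, hplus, hminus⟩ := hps.exists_add_smul_posSemidef hR hle hsa hzR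
  have hmts : ∀ s : ℂ, (h₀ + s • z).PosSemidef → IsMTS n (h₀ + s • z) := fun s hs =>
    ⟨hs, by rw [Pexp_add, Pexp_smul, hPz, smul_zero, add_zero, hP₀],
      by rw [Qexp_add, Qexp_smul, hQz, smul_zero, add_zero, hQ₀]⟩
  rw [sub_eq_add_neg, ← neg_smul] at hminus
  have := hext.2 _ _ (1 / 2) (by norm_num) (by norm_num) (hmts _ hplus) (hmts _ hminus)
    (by push_cast; module)
  simpa [hε.ne'] using this.1

end MarginalTracialStates

/-- extremality of a marginal tracial state `h₀` is equivalent to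
`(R (B⊗B) R) ∩ (ℂI + V) = ℂ h₀`. -/
theorem stmt12 (n : ℕ) (hn : 0 < n)
    (h₀ R : Matrix (Fin n × Fin n) (Fin n × Fin n) ℂ)
    (hmts : IsMTS n h₀)
    (hRherm : Rᴴ = R) (hRidem : R * R = R)
    (hRrange : LinearMap.range (Matrix.toLin' R) = LinearMap.range (Matrix.toLin' h₀)) :
    IsExtremalMTS n h₀ ↔
      ∀ k : Matrix (Fin n × Fin n) (Fin n × Fin n) ℂ,
        ((∃ a, k = R * a * R) ∧
         (∃ (c : ℂ) (v : Matrix (Fin n × Fin n) (Fin n × Fin n) ℂ),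
            Pexp n v + Qexp n v = 0 ∧ k = c • (1 : Matrix (Fin n × Fin n) (Fin n × Fin n) ℂ) + v))
        ↔ (∃ c : ℂ, k = c • h₀) := by
  have hn₀ := hn.ne'
  have hRh₀ : R * h₀ = h₀ := mul_eq_self_of_range_toLin'_le hRidem hRrange.ge
  have hh₀R : h₀ * R = h₀ := by
    simpa [hRherm, hmts.1.1.eq] using congrArg conjTranspose hRh₀
  have hcorner : R * h₀ * R = h₀ := by rw [hRh₀, hh₀R]
  constructor
  · refine fun hext k => ⟨?_, ?_⟩
    · rintro ⟨⟨a, rfl⟩, c, v, hv, hk⟩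
      obtain ⟨hPv, hQv⟩ := (Pexp_add_Qexp_eq_zero_iff hn₀).mp hv
      refine ⟨c, sub_eq_zero.mp (hext.eq_zero_of_mem_cornerKer hRherm hRrange.le ⟨?_, ?_, ?_⟩)⟩
      · rw [Matrix.mul_sub, Matrix.sub_mul, mul_smul_comm, smul_mul_assoc, hcorner,
          show R * (R * a * R) * R = (R * R) * a * (R * R) by noncomm_ring, hRidem]
      · rw [Pexp_sub, hk, Pexp_add, Pexp_smul, Pexp_smul, Pexp_one hn₀, hPv, hmts.2.1, add_zero,
          sub_self]
      · rw [Qexp_sub, hk, Qexp_add, Qexp_smul, Qexp_smul, Qexp_one hn₀, hQv, hmts.2.2, add_zero,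
          sub_self]
    · rintro ⟨c, rfl⟩
      refine ⟨⟨c • h₀, by rw [mul_smul_comm, smul_mul_assoc, hcorner]⟩, c, c • (h₀ - 1), ?_,
        by module⟩
      rw [Pexp_smul, Qexp_smul, ← smul_add, hmts.Pexp_add_Qexp_sub_one hn₀, smul_zero]
  · intro hcond
    have heq_of_ker : ∀ g, IsMTS n g → (∀ x, h₀ *ᵥ x = 0 → g *ᵥ x = 0) → g = h₀ := by
      intro g hg hker
      have hgR : g * R = g := mul_eq_self_of_ker_le hh₀R hker
      have hRg : R * g = g := by
        simpa [hRherm, hg.1.1.eq] using congrArg conjTranspose hgR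
      obtain ⟨c, hc⟩ := (hcond g).mp
        ⟨⟨g, by rw [hRg, hgR]⟩, 1, g - 1, hg.Pexp_add_Qexp_sub_one hn₀, by module⟩
      exact hg.eq_of_eq_smul hn₀ hmts hc
    refine ⟨hmts, fun h₁ h₂ t ht0 ht1 hm1 hm2 heq =>
      ⟨heq_of_ker h₁ hm1 fun x hx => ?_, heq_of_ker h₂ hm2 fun x hx => ?_⟩⟩
    · rw [heq] at hx
      exact hm1.1.mulVec_eq_zero_of_smul_add hm2.1 ht0 (by linarith) hx
    · rw [heq, add_comm] at hx
      exact hm2.1.mulVec_eq_zero_of_smul_add hm1.1 (by linarith) ht0.le hx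
end

section
/- Let P, Q be the conditional expectations of B ⊗ B onto B ⊗ I and I ⊗ B. Then (P - Q)² is the orthogonal projection of the Hilbert space B ⊗ B (with Hilbert–Schmidt inner product) onto N ⊗ I + I ⊗ N, and consequently I - (P-Q)² is the orthogonal projection onto ℂI + N ⊗ N. -/
open Matrix Kronecker
open scoped ComplexOrder

/-- `(P - Q)²` as a map on `B ⊗ B`. -/
noncomputable def PQsq (n : ℕ) (m : Matrix (Fin n × Fin n) (Fin n × Fin n) ℂ) :
    Matrix (Fin n × Fin n) (Fin n × Fin n) ℂ :=
  Pexp n (Pexp n m - Qexp n m) - Qexp n (Pexp n m - Qexp n m)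

/-!
With `τ₁ = tr ⊗ id / n` and `τ₂ = id ⊗ tr / n` the normalized partial traces, `P m = τ₂ m ⊗ I`
and `Q m = I ⊗ τ₁ m`. On an elementary tensor, writing `x = x₀ + τ(x) I` and `y = y₀ + τ(y) I`
with `x₀, y₀ ∈ N`, one computes `PQ = QP = τ(·) I`, so
`(P - Q)² (x ⊗ y) = τ(y) x₀ ⊗ I + τ(x) I ⊗ y₀`, and
`(I - (P - Q)²) (x ⊗ y) = τ(x) τ(y) I + x₀ ⊗ y₀`.
Elementary tensors span `B ⊗ B`, so by linearity `(P - Q)²` maps onto `N ⊗ I + I ⊗ N`, fixes it,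
and kills `ℂI + N ⊗ N`. Self-adjointness reduces to that of `P` and `Q`, which is the duality
`tr (M (A ⊗ I)) = n · tr (τ₂(M) A)`.
-/

namespace Matrix

section PartialTrace

variable {ι κ R : Type*} [CommSemiring R]

def traceRight [Fintype κ] : Matrix (ι × κ) (ι × κ) R →ₗ[R] Matrix ι ι R where
  toFun M := of fun i j => ∑ k, M (i, k) (j, k)
  map_add' M N := by ext; simp [Finset.sum_add_distrib]
  map_smul' c M := by ext; simp [Finset.mul_sum]

def traceLeft [Fintype ι] : Matrix (ι × κ) (ι × κ) R →ₗ[R] Matrix κ κ R where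
  toFun M := of fun k l => ∑ i, M (i, k) (i, l)
  map_add' M N := by ext; simp [Finset.sum_add_distrib]
  map_smul' c M := by ext; simp [Finset.mul_sum]

@[simp]
theorem traceRight_apply [Fintype κ] (M : Matrix (ι × κ) (ι × κ) R) (i j : ι) :
    traceRight M i j = ∑ k, M (i, k) (j, k) := rfl

@[simp]
theorem traceLeft_apply [Fintype ι] (M : Matrix (ι × κ) (ι × κ) R) (k l : κ) :
    traceLeft M k l = ∑ i, M (i, k) (i, l) := rfl

theorem traceRight_kronecker [Fintype κ] (A : Matrix ι ι R) (B : Matrix κ κ R) :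
    traceRight (A ⊗ₖ B) = B.trace • A := by
  ext i j
  simp [trace, Finset.mul_sum, mul_comm]

theorem traceLeft_kronecker [Fintype ι] (A : Matrix ι ι R) (B : Matrix κ κ R) :
    traceLeft (A ⊗ₖ B) = A.trace • B := by
  ext k l
  simp [trace, Finset.sum_mul]

theorem trace_mul_kronecker_one [Fintype ι] [Fintype κ] [DecidableEq κ]
    (M : Matrix (ι × κ) (ι × κ) R) (A : Matrix ι ι R) :
    (M * (A ⊗ₖ (1 : Matrix κ κ R))).trace = (traceRight M * A).trace := by
  simp only [trace, diag_apply, mul_apply, kroneckerMap_apply, one_apply, mul_ite, mul_one,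
    mul_zero, Fintype.sum_prod_type, Finset.sum_ite_eq', Finset.mem_univ, ↓reduceIte,
    traceRight_apply, Finset.sum_mul]
  exact Finset.sum_congr rfl fun _ _ => Finset.sum_comm

theorem trace_mul_one_kronecker [Fintype ι] [Fintype κ] [DecidableEq ι]
    (M : Matrix (ι × κ) (ι × κ) R) (B : Matrix κ κ R) :
    (M * ((1 : Matrix ι ι R) ⊗ₖ B)).trace = (traceLeft M * B).trace := by
  simp only [trace, diag_apply, mul_apply, kroneckerMap_apply, one_apply, ite_mul, one_mul,
    zero_mul, mul_ite, mul_zero, Fintype.sum_prod_type, Finset.sum_ite_irrel,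
    Finset.sum_const_zero, Finset.sum_ite_eq', Finset.mem_univ, ↓reduceIte, traceLeft_apply,
    Finset.sum_mul]
  rw [Finset.sum_comm]
  exact Finset.sum_congr rfl fun _ _ => Finset.sum_comm

theorem traceRight_conjTranspose [Fintype κ] [StarRing R] (M : Matrix (ι × κ) (ι × κ) R) :
    traceRight Mᴴ = (traceRight M)ᴴ := by
  ext i j
  simp

theorem traceLeft_conjTranspose [Fintype ι] [StarRing R] (M : Matrix (ι × κ) (ι × κ) R) :
    traceLeft Mᴴ = (traceLeft M)ᴴ := by
  ext i j
  simp

end PartialTrace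

theorem trace_sub_trace_div_smul_one {n : ℕ} {K : Type*} [Field K] (hn : (n : K) ≠ 0)
    (A : Matrix (Fin n) (Fin n) K) :
    (A - (A.trace / n) • (1 : Matrix (Fin n) (Fin n) K)).trace = 0 := by
  rw [trace_sub, trace_smul, trace_one, Fintype.card_fin, smul_eq_mul, div_mul_cancel₀ _ hn,
    sub_self]

section Kronecker

variable {l m n p α : Type*}

theorem sub_kronecker [NonUnitalNonAssocRing α] (A₁ A₂ : Matrix l m α) (B : Matrix n p α) :
    (A₁ - A₂) ⊗ₖ B = A₁ ⊗ₖ B - A₂ ⊗ₖ B := by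
  ext; simp [sub_mul]

theorem kronecker_sub [NonUnitalNonAssocRing α] (A : Matrix l m α) (B₁ B₂ : Matrix n p α) :
    A ⊗ₖ (B₁ - B₂) = A ⊗ₖ B₁ - A ⊗ₖ B₂ := by
  ext; simp [mul_sub]

@[elab_as_elim]
theorem kronecker_induction [Fintype l] [Fintype m] [Fintype n] [Fintype p] [DecidableEq l]
    [DecidableEq m] [DecidableEq n] [DecidableEq p] [NonAssocSemiring α]
    {motive : Matrix (l × n) (m × p) α → Prop} (M : Matrix (l × n) (m × p) α) (zero : motive 0)
    (add : ∀ M N, motive M → motive N → motive (M + N))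
    (kronecker : ∀ A B, motive (A ⊗ₖ B)) : motive M :=
  Matrix.induction_on' M zero add fun ⟨i, j⟩ ⟨k, l⟩ x => by
    simpa [single_kronecker_single] using kronecker (single i k x) (single j l (1 : α))

end Kronecker

end Matrix

section ConditionalExpectation

variable {n : ℕ}

local notation "𝕄" => Matrix (Fin n × Fin n) (Fin n × Fin n) ℂ
local notation "𝔹" => Matrix (Fin n) (Fin n) ℂ

theorem Pexp_eq_kronecker (m : 𝕄) :
    Pexp n m = ((n : ℂ)⁻¹ • traceRight m) ⊗ₖ (1 : 𝔹) := by
  ext p q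
  simp [Pexp, one_apply, div_eq_inv_mul]

theorem Qexp_eq_kronecker (m : 𝕄) :
    Qexp n m = (1 : 𝔹) ⊗ₖ ((n : ℂ)⁻¹ • traceLeft m) := by
  ext p q
  simp [Qexp, one_apply, div_eq_inv_mul]

variable (n) in
noncomputable def condExpLeft : Module.End ℂ 𝕄 where
  toFun := Pexp n
  map_add' a b := by simp only [Pexp_eq_kronecker, map_add, smul_add, add_kronecker]
  map_smul' c a := by
    simp only [Pexp_eq_kronecker, map_smul, smul_comm _ c, smul_kronecker, RingHom.id_apply]

variable (n) in
noncomputable def condExpRight : Module.End ℂ 𝕄 where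
  toFun := Qexp n
  map_add' a b := by simp only [Qexp_eq_kronecker, map_add, smul_add, kronecker_add]
  map_smul' c a := by
    simp only [Qexp_eq_kronecker, map_smul, smul_comm _ c, kronecker_smul, RingHom.id_apply]

@[simp]
theorem condExpLeft_apply (m : 𝕄) : condExpLeft n m = Pexp n m := rfl

@[simp]
theorem condExpRight_apply (m : 𝕄) : condExpRight n m = Qexp n m := rfl

theorem PQsq_eq_sq : PQsq n = ⇑((condExpLeft n - condExpRight n) ^ 2) := by
  ext m : 1
  simp [PQsq, sq]

theorem Pexp_kronecker (x y : 𝔹) :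
    Pexp n (x ⊗ₖ y) = (y.trace / n) • x ⊗ₖ (1 : 𝔹) := by
  rw [Pexp_eq_kronecker, traceRight_kronecker, smul_smul, smul_kronecker, inv_mul_eq_div]

theorem Qexp_kronecker (x y : 𝔹) :
    Qexp n (x ⊗ₖ y) = (x.trace / n) • (1 : 𝔹) ⊗ₖ y := by
  rw [Qexp_eq_kronecker, traceLeft_kronecker, smul_smul, kronecker_smul, inv_mul_eq_div]

theorem Pexp_adjoint (a b : 𝕄) : (bᴴ * Pexp n a).trace = ((Pexp n b)ᴴ * a).trace := by
  rw [Pexp_eq_kronecker, Pexp_eq_kronecker, conjTranspose_kronecker, conjTranspose_one,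
    trace_mul_comm _ a, trace_mul_kronecker_one, trace_mul_kronecker_one, conjTranspose_smul,
    ← traceRight_conjTranspose, star_inv₀, star_natCast, mul_smul_comm, mul_smul_comm,
    trace_smul, trace_smul, trace_mul_comm]

theorem Qexp_adjoint (a b : 𝕄) : (bᴴ * Qexp n a).trace = ((Qexp n b)ᴴ * a).trace := by
  rw [Qexp_eq_kronecker, Qexp_eq_kronecker, conjTranspose_kronecker, conjTranspose_one,
    trace_mul_comm _ a, trace_mul_one_kronecker, trace_mul_one_kronecker, conjTranspose_smul,
    ← traceLeft_conjTranspose, star_inv₀, star_natCast, mul_smul_comm, mul_smul_comm,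
    trace_smul, trace_smul, trace_mul_comm]

theorem PQsq_adjoint (a b : 𝕄) : (bᴴ * PQsq n a).trace = ((PQsq n b)ᴴ * a).trace := by
  have h : ∀ a b, (bᴴ * (condExpLeft n - condExpRight n) a).trace
      = (((condExpLeft n - condExpRight n) b)ᴴ * a).trace := fun a b => by
    simp only [LinearMap.sub_apply, condExpLeft_apply, condExpRight_apply, mul_sub, sub_mul,
      conjTranspose_sub, trace_sub, Pexp_adjoint, Qexp_adjoint]
  rw [PQsq_eq_sq, sq, Module.End.mul_apply, Module.End.mul_apply, h, h]

theorem PQsq_add (a b : 𝕄) : PQsq n (a + b) = PQsq n a + PQsq n b := by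
  simp only [PQsq_eq_sq, map_add]

theorem PQsq_smul (c : ℂ) (a : 𝕄) : PQsq n (c • a) = c • PQsq n a := by
  simp only [PQsq_eq_sq, map_smul]

theorem PQsq_kronecker (hn : (n : ℂ) ≠ 0) (x y : 𝔹) :
    PQsq n (x ⊗ₖ y) = (y.trace / n) • x ⊗ₖ (1 : 𝔹) + (x.trace / n) • (1 : 𝔹) ⊗ₖ y
      - (2 * (x.trace * y.trace / n ^ 2)) • 1 := by
  simp only [PQsq_eq_sq, sq, Module.End.mul_apply, LinearMap.sub_apply, map_sub, map_smul,
    condExpLeft_apply, condExpRight_apply, Pexp_kronecker, Qexp_kronecker, trace_one,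
    Fintype.card_fin, one_kronecker_one, div_self hn, one_smul]
  match_scalars <;> ring

variable (n) in
def tracelessKroneckers : Set 𝕄 := {w | ∃ x y : 𝔹, x.trace = 0 ∧ y.trace = 0 ∧ w = x ⊗ₖ y}

theorem PQsq_kronecker_one (hn : (n : ℂ) ≠ 0) {x : 𝔹} (hx : x.trace = 0) :
    PQsq n (x ⊗ₖ (1 : 𝔹)) = x ⊗ₖ (1 : 𝔹) := by
  simp [PQsq_kronecker hn, hx, div_self hn]

theorem PQsq_one_kronecker (hn : (n : ℂ) ≠ 0) {y : 𝔹} (hy : y.trace = 0) :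
    PQsq n ((1 : 𝔹) ⊗ₖ y) = (1 : 𝔹) ⊗ₖ y := by
  simp [PQsq_kronecker hn, hy, div_self hn]

theorem PQsq_one (hn : (n : ℂ) ≠ 0) : PQsq n 1 = 0 := by
  rw [← one_kronecker_one, PQsq_kronecker hn, one_kronecker_one]
  simp only [trace_one, Fintype.card_fin]
  match_scalars
  field_simp
  ring

theorem PQsq_eq_zero_of_mem_span (hn : (n : ℂ) ≠ 0) {v : 𝕄}
    (hv : v ∈ Submodule.span ℂ (tracelessKroneckers n)) : PQsq n v = 0 := by
  have h : Submodule.span ℂ (tracelessKroneckers n)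
      ≤ LinearMap.ker ((condExpLeft n - condExpRight n) ^ 2) := by
    rw [Submodule.span_le]
    rintro _ ⟨x, y, hx, hy, rfl⟩
    simp [← PQsq_eq_sq, PQsq_kronecker hn, hx, hy]
  simpa [PQsq_eq_sq] using h hv

theorem exists_PQsq_eq_kronecker_one_add (hn : (n : ℂ) ≠ 0) (m : 𝕄) :
    ∃ x y : 𝔹, x.trace = 0 ∧ y.trace = 0 ∧ PQsq n m = x ⊗ₖ (1 : 𝔹) + (1 : 𝔹) ⊗ₖ y := by
  induction m using Matrix.kronecker_induction with
  | zero => exact ⟨0, 0, trace_zero .., trace_zero .., by simp [PQsq_eq_sq]⟩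
  | add M N hM hN =>
    obtain ⟨x, y, hx, hy, hM⟩ := hM
    obtain ⟨x', y', hx', hy', hN⟩ := hN
    refine ⟨x + x', y + y', by rw [trace_add, hx, hx', add_zero],
      by rw [trace_add, hy, hy', add_zero], ?_⟩
    rw [PQsq_add, hM, hN, add_kronecker, kronecker_add]
    abel
  | kronecker A B =>
    refine ⟨(B.trace / n) • (A - (A.trace / n) • 1), (A.trace / n) • (B - (B.trace / n) • 1),
      by rw [trace_smul, trace_sub_trace_div_smul_one hn, smul_zero],
      by rw [trace_smul, trace_sub_trace_div_smul_one hn, smul_zero], ?_⟩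
    rw [PQsq_kronecker hn, ← one_kronecker_one]
    simp only [smul_kronecker, kronecker_smul, sub_kronecker, kronecker_sub]
    match_scalars <;> ring

theorem sub_PQsq_mem_sup (hn : (n : ℂ) ≠ 0) (m : 𝕄) :
    m - PQsq n m ∈ Submodule.span ℂ {1} ⊔ Submodule.span ℂ (tracelessKroneckers n) := by
  induction m using Matrix.kronecker_induction with
  | zero => simp [PQsq_eq_sq]
  | add M N hM hN =>
    rw [PQsq_add, add_sub_add_comm]
    exact add_mem hM hN
  | kronecker A B =>
    have h : A ⊗ₖ B - PQsq n (A ⊗ₖ B) = (A.trace * B.trace / n ^ 2) • 1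
        + (A - (A.trace / n) • 1) ⊗ₖ (B - (B.trace / n) • 1) := by
      rw [PQsq_kronecker hn, ← one_kronecker_one]
      simp only [smul_kronecker, kronecker_smul, sub_kronecker, kronecker_sub]
      match_scalars <;> ring
    rw [h]
    exact Submodule.add_mem_sup (Submodule.smul_mem _ _ (Submodule.mem_span_singleton_self 1))
      (Submodule.subset_span ⟨_, _, trace_sub_trace_div_smul_one hn A,
        trace_sub_trace_div_smul_one hn B, rfl⟩)

end ConditionalExpectation

/-- `(P - Q)²` is the Hilbert–Schmidt orthogonal projection of `B ⊗ B` onto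
`N ⊗ I + I ⊗ N`, and hence `I - (P - Q)²` is the orthogonal projection onto `ℂI + N ⊗ N`. -/
theorem stmt17 (n : ℕ) (hn : 0 < n) :
    (∀ m, PQsq n (PQsq n m) = PQsq n m) ∧
    (∀ a b : Matrix (Fin n × Fin n) (Fin n × Fin n) ℂ,
      (bᴴ * PQsq n a).trace / ((n : ℂ)^2) = ((PQsq n b)ᴴ * a).trace / ((n : ℂ)^2)) ∧
    (∀ m, ∃ x y : Matrix (Fin n) (Fin n) ℂ, x.trace = 0 ∧ y.trace = 0 ∧
      PQsq n m = x ⊗ₖ (1 : Matrix (Fin n) (Fin n) ℂ) + (1 : Matrix (Fin n) (Fin n) ℂ) ⊗ₖ y) ∧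
    (∀ x y : Matrix (Fin n) (Fin n) ℂ, x.trace = 0 → y.trace = 0 →
      PQsq n (x ⊗ₖ (1 : Matrix (Fin n) (Fin n) ℂ) + (1 : Matrix (Fin n) (Fin n) ℂ) ⊗ₖ y)
        = x ⊗ₖ (1 : Matrix (Fin n) (Fin n) ℂ) + (1 : Matrix (Fin n) (Fin n) ℂ) ⊗ₖ y) ∧
    (∀ m, ∃ (c : ℂ) (v : Matrix (Fin n × Fin n) (Fin n × Fin n) ℂ),
      v ∈ Submodule.span ℂ {w : Matrix (Fin n × Fin n) (Fin n × Fin n) ℂ |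
        ∃ x y : Matrix (Fin n) (Fin n) ℂ, x.trace = 0 ∧ y.trace = 0 ∧ w = x ⊗ₖ y} ∧
      m - PQsq n m = c • (1 : Matrix (Fin n × Fin n) (Fin n × Fin n) ℂ) + v) ∧
    (∀ (c : ℂ) (v : Matrix (Fin n × Fin n) (Fin n × Fin n) ℂ),
      v ∈ Submodule.span ℂ {w : Matrix (Fin n × Fin n) (Fin n × Fin n) ℂ |
        ∃ x y : Matrix (Fin n) (Fin n) ℂ, x.trace = 0 ∧ y.trace = 0 ∧ w = x ⊗ₖ y} →
      let z := c • (1 : Matrix (Fin n × Fin n) (Fin n × Fin n) ℂ) + v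
      z - PQsq n z = z) := by
  have hn' : (n : ℂ) ≠ 0 := Nat.cast_ne_zero.mpr hn.ne'
  have range := exists_PQsq_eq_kronecker_one_add hn'
  have fixed : ∀ x y : Matrix (Fin n) (Fin n) ℂ, x.trace = 0 → y.trace = 0 →
      PQsq n (x ⊗ₖ (1 : Matrix (Fin n) (Fin n) ℂ) + (1 : Matrix (Fin n) (Fin n) ℂ) ⊗ₖ y)
        = x ⊗ₖ (1 : Matrix (Fin n) (Fin n) ℂ) + (1 : Matrix (Fin n) (Fin n) ℂ) ⊗ₖ y :=
    fun x y hx hy => by rw [PQsq_add, PQsq_kronecker_one hn' hx, PQsq_one_kronecker hn' hy]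
  refine ⟨fun m => ?_, fun a b => by rw [PQsq_adjoint], range, fixed, fun m => ?_,
    fun c v hv => ?_⟩
  · obtain ⟨x, y, hx, hy, h⟩ := range m
    rw [h, fixed x y hx hy]
  · obtain ⟨u, hu, v, hv, h⟩ := Submodule.mem_sup.mp (sub_PQsq_mem_sup hn' m)
    obtain ⟨c, rfl⟩ := Submodule.mem_span_singleton.mp hu
    exact ⟨c, v, hv, h.symm⟩
  · show _ - _ = _
    rw [sub_eq_self, PQsq_add, PQsq_smul, PQsq_one hn', PQsq_eq_zero_of_mem_span hn' hv,
      smul_zero, add_zero]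
end
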